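/- arXiv:2208.07300 — 2 statements merged into one kernel-verified Lean document; each statement's English description precedes it below -/
import Mathlib

section
/- Let 𝓑 be a basis of a Banach space X and 𝐧 a strictly increasing sequence of positive integers. Then 𝓑 is 1-(𝐧, PSLC) if and only if the following two conditions hold simultaneously: (a) for every x ∈ X with ‖x‖_∞ ≤ 1 and every k ∉ supp(x), ‖x‖ ≤ ‖x + e_k‖; (b) for every x ∈ X with ‖x‖_∞ ≤ 1, all scalars s, t with |s| = |t| = 1, every j ∈ 𝐧 and every k ∈ ℕ such that k ∉ supp(x) and j is smaller than every element of ({k} ∪ supp(x)) ∩ 𝐧, one has ‖x + s·e_j‖ ≤ ‖x + t·e_k‖. -/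
open scoped BigOperators ENNReal NNReal

/-- The collection `𝕋(𝐧)`: pairs of finite sets `(A, D)` with `A ⊆ 𝐧`, `|A| ≤ |D|`
and `A < D ∩ 𝐧`. -/
def TPair (seq : ℕ → ℕ) (A D : Finset ℕ) : Prop :=
  (↑A : Set ℕ) ⊆ Set.range seq ∧ A.card ≤ D.card ∧
    ∀ a ∈ A, ∀ d ∈ D, d ∈ Set.range seq → a < d

/-- The collection `𝕊(𝐧)`: pairs of finite sets `(A, D)` with `A ⊆ 𝐧` and `|A| ≤ |D|`. -/
def SPair (seq : ℕ → ℕ) (A D : Finset ℕ) : Prop :=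
  (↑A : Set ℕ) ⊆ Set.range seq ∧ A.card ≤ D.card

/-- The interval `{n_{k+1}, …, n_{k+m}}` of `m` consecutive terms of the sequence `seq`
(0-indexed: `seq k, …, seq (k+m-1)`). -/
def intervalSet (seq : ℕ → ℕ) (k m : ℕ) : Finset ℕ :=
  (Finset.range m).image fun i => seq (k + i)

/-- The (1-based) index `ι(max A)` of the largest element of `A` in the sequence `seq`
(`0` if `A` is empty). -/
noncomputable def iotaMax (seq : ℕ → ℕ) (A : Finset ℕ) : ℕ :=
  if h : A.Nonempty then sInf {i | seq i = A.max' h} + 1 else 0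

/-- The collection `𝕋^ω(𝐧)`: pairs of finite sets `(A, D)` with `A ⊆ 𝐧`, `ω(A) ≤ ω(D)`
and `A < D ∩ 𝐧`. -/
def WTPair (w : Set ℕ → ℝ≥0∞) (seq : ℕ → ℕ) (A D : Finset ℕ) : Prop :=
  (↑A : Set ℕ) ⊆ Set.range seq ∧ w (↑A : Set ℕ) ≤ w (↑D : Set ℕ) ∧
    ∀ a ∈ A, ∀ d ∈ D, d ∈ Set.range seq → a < d

/-- A (semi-normalized) basis `(e_n)` of a Banach space `X`, together with its biorthogonal
functionals `(e_n^*)`: the span of the `e_n` is norm-dense, `e_j^*(e_k) = δ_{jk}`, and the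
norms of the `e_n` and `e_n^*` are bounded above and away from zero. -/
structure BasisOf (𝕜 : Type*) (X : Type*) [RCLike 𝕜] [NormedAddCommGroup X]
    [NormedSpace 𝕜 X] where
  e : ℕ → X
  coord : ℕ → X →L[𝕜] 𝕜
  dense_span : Dense (↑(Submodule.span 𝕜 (Set.range e)) : Set X)
  biorth : ∀ j k : ℕ, coord j (e k) = if j = k then (1 : 𝕜) else 0
  norm_bounds : ∃ c₁ c₂ : ℝ, 0 < c₁ ∧ (∀ n, c₁ ≤ ‖e n‖ ∧ c₁ ≤ ‖coord n‖) ∧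
    ∀ n, ‖e n‖ ≤ c₂ ∧ ‖coord n‖ ≤ c₂

namespace BasisOf

variable {𝕜 : Type*} {X : Type*} [RCLike 𝕜] [NormedAddCommGroup X] [NormedSpace 𝕜 X]
variable (B : BasisOf 𝕜 X)

/-- The projection `P_A(x) = ∑_{n ∈ A} e_n^*(x) e_n`. -/
noncomputable def proj (A : Finset ℕ) (x : X) : X := ∑ n ∈ A, B.coord n x • B.e n

/-- `1_{εA} = ∑_{n ∈ A} ε_n e_n`. -/
noncomputable def sgnSum (ε : ℕ → 𝕜) (A : Finset ℕ) : X := ∑ n ∈ A, ε n • B.e n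

/-- `1_A = ∑_{n ∈ A} e_n`. -/
noncomputable def ones (A : Finset ℕ) : X := ∑ n ∈ A, B.e n

/-- `P^𝐧_m(x) = ∑_{i=1}^m e_{n_i}^*(x) e_{n_i}`, the projection on the first `m` terms of the
subsequence given by `seq`. -/
noncomputable def projSeq (seq : ℕ → ℕ) (m : ℕ) (x : X) : X :=
  ∑ i ∈ Finset.range m, B.coord (seq i) x • B.e (seq i)

/-- `A` is a greedy set of `x`: the coefficients inside `A` dominate those outside. -/
def IsGreedySet (x : X) (A : Finset ℕ) : Prop :=
  ∀ a ∈ A, ∀ b ∉ A, ‖B.coord b x‖ ≤ ‖B.coord a x‖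

/-- The support `{n : e_n^*(x) ≠ 0}`. -/
def supp (x : X) : Set ℕ := {n | B.coord n x ≠ 0}

/-- `𝓑` is `C`-(`𝐧`, strong partially greedy):
`‖x - G_m(x)‖ ≤ C ⋅ σ̂^𝐧_m(x)` for all `x`, all `m ≥ 1` and all greedy sums. -/
def SPGWith (seq : ℕ → ℕ) (C : ℝ) : Prop :=
  ∀ x : X, ∀ m : ℕ, 1 ≤ m → ∀ A : Finset ℕ, A.card = m → B.IsGreedySet x A →
    ∀ k : ℕ, k ≤ m → ‖x - B.proj A x‖ ≤ C * ‖x - B.projSeq seq k x‖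

/-- `𝓑` is (`𝐧`, strong partially greedy). -/
def SPG (seq : ℕ → ℕ) : Prop := ∃ C : ℝ, 1 ≤ C ∧ B.SPGWith seq C

/-- `𝓑` is quasi-greedy with constant `C`. -/
def QuasiGreedyWith (C : ℝ) : Prop :=
  ∀ x : X, ∀ A : Finset ℕ, A.Nonempty → B.IsGreedySet x A → ‖B.proj A x‖ ≤ C * ‖x‖

/-- `𝓑` is quasi-greedy. -/
def QuasiGreedy : Prop := ∃ C : ℝ, B.QuasiGreedyWith C

/-- `𝓑` is suppression quasi-greedy with constant `C`. -/
def SuppQGWith (C : ℝ) : Prop :=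
  ∀ x : X, ∀ A : Finset ℕ, A.Nonempty → B.IsGreedySet x A → ‖x - B.proj A x‖ ≤ C * ‖x‖

/-- `𝓑` is `C`-(`𝐧`, PSLC). -/
def PSLCWith (seq : ℕ → ℕ) (C : ℝ) : Prop :=
  ∀ x : X, (∀ n, ‖B.coord n x‖ ≤ 1) → ∀ A D : Finset ℕ, TPair seq A D →
    (∀ d ∈ D, B.coord d x = 0) →
    (∀ a ∈ A, ∀ j : ℕ, (j ∈ D ∨ B.coord j x ≠ 0) → j ∈ Set.range seq → a < j) →
    ∀ ε δ : ℕ → 𝕜, (∀ n, ‖ε n‖ = 1) → (∀ n, ‖δ n‖ = 1) →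
      ‖x + B.sgnSum ε A‖ ≤ C * ‖x + B.sgnSum δ D‖

/-- `𝓑` is (`𝐧`, PSLC). -/
def PSLC (seq : ℕ → ℕ) : Prop := ∃ C : ℝ, 1 ≤ C ∧ B.PSLCWith seq C

/-- `𝓑` is (`𝐧`, superconservative) with constant `C`. -/
def SuperconservativeWith (seq : ℕ → ℕ) (C : ℝ) : Prop :=
  ∀ A D : Finset ℕ, TPair seq A D →
    ∀ ε δ : ℕ → 𝕜, (∀ n, ‖ε n‖ = 1) → (∀ n, ‖δ n‖ = 1) →
      ‖B.sgnSum ε A‖ ≤ C * ‖B.sgnSum δ D‖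

/-- `𝓑` is (`𝐧`, superconservative). -/
def Superconservative (seq : ℕ → ℕ) : Prop :=
  ∃ C : ℝ, 0 < C ∧ B.SuperconservativeWith seq C

/-- `𝓑` is (`𝐧`, conservative) with constant `C`. -/
def ConservativeWith (seq : ℕ → ℕ) (C : ℝ) : Prop :=
  ∀ A D : Finset ℕ, TPair seq A D → ‖B.ones A‖ ≤ C * ‖B.ones D‖

/-- `𝓑` is (`𝐧`, conservative). -/
def Conservative (seq : ℕ → ℕ) : Prop := ∃ C : ℝ, 0 < C ∧ B.ConservativeWith seq C

/-- `𝓑` is (`𝐧`, democratic) with constant `C`. -/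
def DemocraticWith (seq : ℕ → ℕ) (C : ℝ) : Prop :=
  ∀ A D : Finset ℕ, SPair seq A D → ‖B.ones A‖ ≤ C * ‖B.ones D‖

/-- `𝓑` is (`𝐧`, democratic). -/
def Democratic (seq : ℕ → ℕ) : Prop := ∃ C : ℝ, B.DemocraticWith seq C

/-- `𝓑` is (`𝐧`, almost greedy) with constant `C`:
`‖x - G_m(x)‖ ≤ C σ̃^𝐧_m(x)` where `σ̃^𝐧_m(x) = inf {‖x - P_D(x)‖ : D ⊆ 𝐧, |D| = m}`. -/
def AlmostGreedyWith (seq : ℕ → ℕ) (C : ℝ) : Prop :=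
  ∀ x : X, ∀ m : ℕ, 1 ≤ m → ∀ A : Finset ℕ, A.card = m → B.IsGreedySet x A →
    ∀ D : Finset ℕ, (↑D : Set ℕ) ⊆ Set.range seq → D.card = m →
      ‖x - B.proj A x‖ ≤ C * ‖x - B.proj D x‖

/-- `𝓑` is (`𝐧`, almost greedy). -/
def AlmostGreedy (seq : ℕ → ℕ) : Prop := ∃ C : ℝ, 1 ≤ C ∧ B.AlmostGreedyWith seq C

/-- `𝓑` is 1-unconditional. -/
def OneUnconditional : Prop :=
  ∀ (F : Finset ℕ) (a b : ℕ → 𝕜), (∀ n, ‖a n‖ ≤ ‖b n‖) →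
    ‖∑ n ∈ F, a n • B.e n‖ ≤ ‖∑ n ∈ F, b n • B.e n‖

/-- `𝓑` is `C`-(`𝐧`, consecutive almost greedy) of type I. -/
def CAGIWith (seq : ℕ → ℕ) (C : ℝ) : Prop :=
  ∀ x : X, ∀ m : ℕ, 1 ≤ m → ∀ A : Finset ℕ, A.card = m → B.IsGreedySet x A →
    ∀ k : ℕ, ‖x - B.proj A x‖ ≤ C * ‖x - B.proj (intervalSet seq k m) x‖

/-- `𝓑` is `C`-(`𝐧`, consecutive almost greedy) of type II. -/
def CAGIIWith (seq : ℕ → ℕ) (C : ℝ) : Prop :=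
  ∀ x : X, ∀ m : ℕ, 1 ≤ m → ∀ A : Finset ℕ, A.card = m → B.IsGreedySet x A →
    ∀ k p : ℕ, ((↑(intervalSet seq k p) : Set ℕ) ∩ B.supp x).ncard ≤ m →
      ‖x - B.proj A x‖ ≤ C * ‖x - B.proj (intervalSet seq k p) x‖

/-- `𝓑` is `C`-(`𝐧`, RSLC). -/
def RSLCWith (seq : ℕ → ℕ) (C : ℝ) : Prop :=
  ∀ x : X, (∀ n, ‖B.coord n x‖ ≤ 1) → ∀ A D : Finset ℕ, SPair seq A D →
    (∀ d ∈ D, B.coord d x = 0) →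
    (∀ j : ℕ, (j ∈ D ∨ B.coord j x ≠ 0) → j ∈ Set.range seq →
      (∀ a ∈ A, j < a) ∨ (∀ a ∈ A, a < j)) →
    ∀ ε δ : ℕ → 𝕜, (∀ n, ‖ε n‖ = 1) → (∀ n, ‖δ n‖ = 1) →
      ‖x + B.sgnSum ε A‖ ≤ C * ‖x + B.sgnSum δ D‖

/-- `𝓑` is `C`-(`𝐧`, SLC). -/
def SLCWith (seq : ℕ → ℕ) (C : ℝ) : Prop :=
  ∀ x : X, (∀ n, ‖B.coord n x‖ ≤ 1) → ∀ A D : Finset ℕ, SPair seq A D →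
    Disjoint A D → (∀ a ∈ A, B.coord a x = 0) → (∀ d ∈ D, B.coord d x = 0) →
    ∀ ε δ : ℕ → 𝕜, (∀ n, ‖ε n‖ = 1) → (∀ n, ‖δ n‖ = 1) →
      ‖x + B.sgnSum ε A‖ ≤ C * ‖x + B.sgnSum δ D‖

/-- The Lebesgue-type parameter `L̂^𝐧_m`: the least constant `C ∈ [0,∞]` with
`‖x - G_m(x)‖ ≤ C σ̂^𝐧_m(x)` for all `x` and all greedy sums `G_m(x)`. -/
noncomputable def Lhat (seq : ℕ → ℕ) (m : ℕ) : ℝ≥0∞ :=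
  sInf {C : ℝ≥0∞ | ∀ (x : X) (A : Finset ℕ), A.card = m → B.IsGreedySet x A →
    ∀ k : ℕ, k ≤ m →
      (‖x - B.proj A x‖₊ : ℝ≥0∞) ≤ C * (‖x - B.projSeq seq k x‖₊ : ℝ≥0∞)}

/-- The parameter `g_m^c`. -/
noncomputable def gc (m : ℕ) : ℝ≥0∞ :=
  ⨆ (x : X) (_ : x ≠ 0) (A : Finset ℕ) (_ : A.card ≤ m) (_ : B.IsGreedySet x A),
    (‖x - B.proj A x‖₊ : ℝ≥0∞) / (‖x‖₊ : ℝ≥0∞)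

/-- The parameter `g̃_m`. -/
noncomputable def gtilde (m : ℕ) : ℝ≥0∞ :=
  ⨆ (x : X) (_ : x ≠ 0) (A : Finset ℕ) (A' : Finset ℕ) (_ : A ⊆ A') (_ : A.card < A'.card)
    (_ : A'.card ≤ m) (_ : B.IsGreedySet x A) (_ : B.IsGreedySet x A'),
    (‖B.proj A' x - B.proj A x‖₊ : ℝ≥0∞) / (‖x‖₊ : ℝ≥0∞)

/-- The parameter `sc^𝐧_m`. -/
noncomputable def scParam (seq : ℕ → ℕ) (m : ℕ) : ℝ≥0∞ :=
  ⨆ (A : Finset ℕ) (D : Finset ℕ) (_ : TPair seq A D) (_ : D.card ≤ m)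
    (_ : ∀ a ∈ A, a ≤ seq (m - 1)) (ε : ℕ → 𝕜) (_ : ∀ n, ‖ε n‖ = 1)
    (δ : ℕ → 𝕜) (_ : ∀ n, ‖δ n‖ = 1),
    (‖B.sgnSum ε A‖₊ : ℝ≥0∞) / (‖B.sgnSum δ D‖₊ : ℝ≥0∞)

/-- The parameter `ω^𝐧_m`. -/
noncomputable def omegaParam (seq : ℕ → ℕ) (m : ℕ) : ℝ≥0∞ :=
  ⨆ (x : X) (_ : ∀ n, ‖B.coord n x‖ ≤ 1) (A : Finset ℕ) (D : Finset ℕ)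
    (_ : (↑A : Set ℕ) ⊆ Set.range seq) (_ : A.card ≤ D.card) (_ : D.card ≤ m)
    (_ : ∀ a ∈ A, a ≤ seq (m - 1)) (_ : ∀ d ∈ D, B.coord d x = 0)
    (_ : ∀ a ∈ A, ∀ j : ℕ, (j ∈ D ∨ B.coord j x ≠ 0) → j ∈ Set.range seq → a < j)
    (ε : ℕ → 𝕜) (_ : ∀ n, ‖ε n‖ = 1) (δ : ℕ → 𝕜) (_ : ∀ n, ‖δ n‖ = 1),
    (‖x + B.sgnSum ε A‖₊ : ℝ≥0∞) / (‖x + B.sgnSum δ D‖₊ : ℝ≥0∞)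

/-- The parameter `ω̂^𝐧_m`. -/
noncomputable def omegaHatParam (seq : ℕ → ℕ) (m : ℕ) : ℝ≥0∞ :=
  ⨆ (x : X) (_ : ∀ n, ‖B.coord n x‖ ≤ 1) (A : Finset ℕ) (D : Finset ℕ)
    (_ : (↑A : Set ℕ) ⊆ Set.range seq) (_ : A.card ≤ D.card) (_ : D.card ≤ m)
    (_ : ∀ a ∈ A, a ≤ seq (m - 1))
    (_ : ∀ d ∈ D, B.coord d (x - B.proj A x) = 0)
    (_ : ∀ a ∈ A, ∀ j : ℕ, (j ∈ D ∨ B.coord j (x - B.proj A x) ≠ 0) →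
      j ∈ Set.range seq → a < j)
    (ε : ℕ → 𝕜) (_ : ∀ n, ‖ε n‖ = 1),
    (‖x‖₊ : ℝ≥0∞) / (‖x - B.proj A x + B.sgnSum ε D‖₊ : ℝ≥0∞)

/-- `κ = sup_{j,k} ‖e_j‖ ‖e_k^*‖`. -/
noncomputable def kappa : ℝ≥0∞ :=
  ⨆ (j : ℕ) (k : ℕ), ((‖B.e j‖₊ * ‖B.coord k‖₊ : ℝ≥0) : ℝ≥0∞)

/-- `𝓑` is `𝐬`-(`𝐧`, strong partially greedy) with constant `C`:
the strong partially greedy inequality for all orders `m` in the sequence `s`. -/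
def SPGOnWith (seq : ℕ → ℕ) (s : ℕ → ℕ) (C : ℝ) : Prop :=
  ∀ x : X, ∀ i : ℕ, ∀ A : Finset ℕ, A.card = s i → B.IsGreedySet x A →
    ∀ k : ℕ, k ≤ s i → ‖x - B.proj A x‖ ≤ C * ‖x - B.projSeq seq k x‖

/-- `𝓑` is (`λ`, `𝐧`, strong partially greedy). -/
def LamSPG (seq : ℕ → ℕ) (lam : ℝ) : Prop :=
  ∃ C : ℝ, 1 ≤ C ∧ ∀ x : X, ∀ m : ℕ, 1 ≤ m →
    ∀ A : Finset ℕ, A.card = ⌈lam * (m : ℝ)⌉₊ → B.IsGreedySet x A →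
      ∀ k : ℕ, k ≤ m → ‖x - B.proj A x‖ ≤ C * ‖x - B.projSeq seq k x‖

/-- `𝓑` is (`λ`, `𝐧`, PSLC). -/
def LamPSLC (seq : ℕ → ℕ) (lam : ℝ) : Prop :=
  ∃ C : ℝ, 1 ≤ C ∧ ∀ x : X, (∀ n, ‖B.coord n x‖ ≤ 1) →
    ∀ A D : Finset ℕ, (↑A : Set ℕ) ⊆ Set.range seq → A.card ≤ D.card →
      (lam - 1) * (iotaMax seq A : ℝ) + A.card ≤ D.card →
      (∀ d ∈ D, B.coord d x = 0) →
      (∀ a ∈ A, ∀ j : ℕ, (j ∈ D ∨ B.coord j x ≠ 0) → j ∈ Set.range seq → a < j) →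
      ∀ ε δ : ℕ → 𝕜, (∀ n, ‖ε n‖ = 1) → (∀ n, ‖δ n‖ = 1) →
        ‖x + B.sgnSum ε A‖ ≤ C * ‖x + B.sgnSum δ D‖

/-- `𝓑` is (`λ`, `𝐧`, superconservative). -/
def LamSuperconservative (seq : ℕ → ℕ) (lam : ℝ) : Prop :=
  ∃ C : ℝ, 0 < C ∧ ∀ A D : Finset ℕ, TPair seq A D →
    (lam - 1) * (iotaMax seq A : ℝ) + A.card ≤ D.card →
    ∀ ε δ : ℕ → 𝕜, (∀ n, ‖ε n‖ = 1) → (∀ n, ‖δ n‖ = 1) →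
      ‖B.sgnSum ε A‖ ≤ C * ‖B.sgnSum δ D‖

/-- `𝓑` is (`λ`, `𝐧`, conservative). -/
def LamConservative (seq : ℕ → ℕ) (lam : ℝ) : Prop :=
  ∃ C : ℝ, 0 < C ∧ ∀ A D : Finset ℕ, TPair seq A D →
    (lam - 1) * (iotaMax seq A : ℝ) + A.card ≤ D.card →
    ‖B.ones A‖ ≤ C * ‖B.ones D‖

/-- `𝓑` is `ω`-(`𝐧`, strong partially greedy) for the weight on sets `w`. -/
def WSPG (seq : ℕ → ℕ) (w : Set ℕ → ℝ≥0∞) : Prop :=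
  ∃ C : ℝ, 1 ≤ C ∧ ∀ x : X, ∀ m : ℕ, 1 ≤ m → ∀ A : Finset ℕ, A.card = m →
    B.IsGreedySet x A → ∀ m' : ℕ,
      w (↑((Finset.range m').image seq \ A) : Set ℕ) ≤
        w (↑(A \ (Finset.range m').image seq) : Set ℕ) →
      ‖x - B.proj A x‖ ≤ C * ‖x - B.proj ((Finset.range m').image seq) x‖

/-- `𝓑` is `ω`-(`𝐧`, PSLC). -/
def WPSLC (seq : ℕ → ℕ) (w : Set ℕ → ℝ≥0∞) : Prop :=
  ∃ C : ℝ, 1 ≤ C ∧ ∀ x : X, (∀ n, ‖B.coord n x‖ ≤ 1) →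
    ∀ A D : Finset ℕ, WTPair w seq A D →
      (∀ d ∈ D, B.coord d x = 0) →
      (∀ a ∈ A, ∀ j : ℕ, (j ∈ D ∨ B.coord j x ≠ 0) → j ∈ Set.range seq → a < j) →
      ∀ ε δ : ℕ → 𝕜, (∀ n, ‖ε n‖ = 1) → (∀ n, ‖δ n‖ = 1) →
        ‖x + B.sgnSum ε A‖ ≤ C * ‖x + B.sgnSum δ D‖

/-- `𝓑` is `ω`-(`𝐧`, superconservative). -/
def WSuperconservative (seq : ℕ → ℕ) (w : Set ℕ → ℝ≥0∞) : Prop :=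
  ∃ C : ℝ, 0 < C ∧ ∀ A D : Finset ℕ, WTPair w seq A D →
    ∀ ε δ : ℕ → 𝕜, (∀ n, ‖ε n‖ = 1) → (∀ n, ‖δ n‖ = 1) →
      ‖B.sgnSum ε A‖ ≤ C * ‖B.sgnSum δ D‖

/-- `𝓑` is `ω`-(`𝐧`, conservative). -/
def WConservative (seq : ℕ → ℕ) (w : Set ℕ → ℝ≥0∞) : Prop :=
  ∃ C : ℝ, 0 < C ∧ ∀ A D : Finset ℕ, WTPair w seq A D → ‖B.ones A‖ ≤ C * ‖B.ones D‖

end BasisOf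

/-- A Banach space over `𝕜` equipped with a basis. -/
structure BanachWithBasis (𝕜 : Type*) [RCLike 𝕜] where
  carrier : Type
  [grp : NormedAddCommGroup carrier]
  [mod : NormedSpace 𝕜 carrier]
  [comp : CompleteSpace carrier]
  basis : BasisOf 𝕜 carrier

attribute [instance] BanachWithBasis.grp BanachWithBasis.mod BanachWithBasis.comp

section AuxStatement10

variable {𝕜 X : Type*} [RCLike 𝕜] [NormedAddCommGroup X] [NormedSpace 𝕜 X]
variable (B : BasisOf 𝕜 X)

lemma aux10_coord_sgnSum (δ : ℕ → 𝕜) (D : Finset ℕ) (j : ℕ) :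
    B.coord j (B.sgnSum δ D) = if j ∈ D then δ j else 0 := by
  classical
  calc B.coord j (B.sgnSum δ D) = ∑ n ∈ D, (if n = j then δ n else 0) := by
        simp only [BasisOf.sgnSum, map_sum, map_smul, B.biorth, smul_eq_mul]
        exact Finset.sum_congr rfl (fun n _ => by
          by_cases h : j = n <;> simp [h, eq_comm])
    _ = if j ∈ D then δ j else 0 := Finset.sum_ite_eq' D j δ

lemma aux10_a' (ha : ∀ x : X, (∀ n, ‖B.coord n x‖ ≤ 1) → ∀ k : ℕ, B.coord k x = 0 →
      ‖x‖ ≤ ‖x + B.e k‖)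
    (y : X) (hy : ∀ n, ‖B.coord n y‖ ≤ 1) (k : ℕ) (hk : B.coord k y = 0)
    (t : 𝕜) (ht : ‖t‖ = 1) : ‖y‖ ≤ ‖y + t • B.e k‖ := by
  have ht0 : t ≠ 0 := by intro h; rw [h, norm_zero] at ht; norm_num at ht
  have h1 : ‖t⁻¹‖ = 1 := by rw [norm_inv, ht]; norm_num
  have key := ha (t⁻¹ • y)
    (fun n => by rw [map_smul, norm_smul, h1, one_mul]; exact hy n) k
    (by rw [map_smul, hk, smul_zero])
  calc ‖y‖ = ‖t⁻¹ • y‖ := by rw [norm_smul, h1, one_mul]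
    _ ≤ ‖t⁻¹ • y + B.e k‖ := key
    _ = ‖t • (t⁻¹ • y + B.e k)‖ := by rw [norm_smul, ht, one_mul]
    _ = ‖y + t • B.e k‖ := by rw [smul_add, smul_inv_smul₀ ht0]

lemma aux10_base (ha : ∀ x : X, (∀ n, ‖B.coord n x‖ ≤ 1) → ∀ k : ℕ, B.coord k x = 0 →
      ‖x‖ ≤ ‖x + B.e k‖)
    (δ : ℕ → 𝕜) (hδ : ∀ n, ‖δ n‖ = 1) (D : Finset ℕ) :
    ∀ x : X, (∀ n, ‖B.coord n x‖ ≤ 1) → (∀ d ∈ D, B.coord d x = 0) →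
      ‖x‖ ≤ ‖x + B.sgnSum δ D‖ := by
  classical
  induction D using Finset.induction_on with
  | empty => intro x hx _; simp [BasisOf.sgnSum]
  | @insert d D hd ih =>
    intro x hx hzero
    set y := x + B.sgnSum δ D with hy_def
    have hycoord : ∀ n, ‖B.coord n y‖ ≤ 1 := by
      intro n
      rw [hy_def, map_add, aux10_coord_sgnSum]
      by_cases hn : n ∈ D
      · rw [hzero n (Finset.mem_insert_of_mem hn), if_pos hn, zero_add]
        exact le_of_eq (hδ n)
      · rw [if_neg hn, add_zero]; exact hx n
    have hdy : B.coord d y = 0 := by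
      rw [hy_def, map_add, aux10_coord_sgnSum, if_neg hd,
        hzero d (Finset.mem_insert_self d D), add_zero]
    have h1 : ‖x‖ ≤ ‖y‖ :=
      ih x hx (fun n hn => hzero n (Finset.mem_insert_of_mem hn))
    have h2 : ‖y‖ ≤ ‖y + δ d • B.e d‖ := aux10_a' B ha y hycoord d hdy (δ d) (hδ d)
    have h3 : x + B.sgnSum δ (insert d D) = y + δ d • B.e d := by
      rw [hy_def, BasisOf.sgnSum, Finset.sum_insert hd, BasisOf.sgnSum]; abel
    rw [h3]; exact le_trans h1 h2

end AuxStatement10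

/-- A basis is 1-(𝐧, PSLC) iff conditions (a) and (b) hold. -/
theorem statement10 {𝕜 X : Type*} [RCLike 𝕜] [NormedAddCommGroup X] [NormedSpace 𝕜 X]
    [CompleteSpace X] (B : BasisOf 𝕜 X) (seq : ℕ → ℕ) (hseq : StrictMono seq) :
    B.PSLCWith seq 1 ↔
      ((∀ x : X, (∀ n, ‖B.coord n x‖ ≤ 1) → ∀ k : ℕ, B.coord k x = 0 →
          ‖x‖ ≤ ‖x + B.e k‖) ∧
       (∀ x : X, (∀ n, ‖B.coord n x‖ ≤ 1) → ∀ s t : 𝕜, ‖s‖ = 1 → ‖t‖ = 1 →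
          ∀ j ∈ Set.range seq, ∀ k : ℕ, B.coord k x = 0 →
            (∀ i : ℕ, (i = k ∨ B.coord i x ≠ 0) → i ∈ Set.range seq → j < i) →
            ‖x + s • B.e j‖ ≤ ‖x + t • B.e k‖)) := by
  classical
  constructor
  · intro h
    constructor
    · intro x hx k hk
      have key := h x hx ∅ {k}
        ⟨by simp, by simp, by simp⟩
        (by intro d hd; rw [Finset.mem_singleton] at hd; rw [hd]; exact hk)
        (by intro a ha; exact absurd ha (Finset.notMem_empty a))
        (fun _ => 1) (fun _ => 1) (fun _ => norm_one) (fun _ => norm_one)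
      simpa [BasisOf.sgnSum] using key
    · intro x hx s t hs ht j hj k hk hlt
      have key := h x hx {j} {k}
        ⟨by simpa using hj, le_refl _, by
          intro a ha d hd hdr
          rw [Finset.mem_singleton] at ha hd
          rw [ha, hd]
          exact hlt k (Or.inl rfl) (hd ▸ hdr)⟩
        (by intro d hd; rw [Finset.mem_singleton] at hd; rw [hd]; exact hk)
        (by
          intro a ha i hi hir
          rw [Finset.mem_singleton] at ha
          rw [ha]
          rcases hi with hi | hi
          · rw [Finset.mem_singleton] at hi; exact hlt i (Or.inl hi) hir
          · exact hlt i (Or.inr hi) hir)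
        (fun _ => s) (fun _ => t) (fun _ => hs) (fun _ => ht)
      simpa [BasisOf.sgnSum] using key
  · rintro ⟨ha, hb⟩
    intro x hx A D hT hD0 hlt ε δ hε hδ
    rw [one_mul]
    clear hseq
    -- strong form by induction on the cardinality of A
    suffices H : ∀ n : ℕ, ∀ x : X, (∀ m, ‖B.coord m x‖ ≤ 1) → ∀ A D : Finset ℕ,
        A.card = n → TPair seq A D → (∀ d ∈ D, B.coord d x = 0) →
        (∀ a ∈ A, ∀ j : ℕ, (j ∈ D ∨ B.coord j x ≠ 0) → j ∈ Set.range seq → a < j) →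
        ‖x + B.sgnSum ε A‖ ≤ ‖x + B.sgnSum δ D‖ by
      exact H A.card x hx A D rfl hT hD0 hlt
    clear hx hT hD0 hlt x A D
    intro n
    induction n with
    | zero =>
      intro x hx A D hcard hT hD0 _
      rw [Finset.card_eq_zero.mp hcard]
      simp only [BasisOf.sgnSum, Finset.sum_empty, add_zero]
      exact aux10_base B ha δ hδ D x hx hD0
    | succ n ih =>
      intro x hx A D hcard hT hD0 hlt
      obtain ⟨hTsub, hTcard, hTlt⟩ := hT
      have hAne : A.Nonempty := Finset.card_pos.mp (by omega)
      set a := A.min' hAne with ha_def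
      have haA : a ∈ A := A.min'_mem hAne
      have hDne : D.Nonempty := Finset.card_pos.mp (by omega)
      obtain ⟨d, hdD⟩ := hDne
      -- A is disjoint from the support of x
      have hAx : ∀ a' ∈ A, B.coord a' x = 0 := by
        intro a' ha'
        by_contra hne
        exact absurd (hlt a' ha' a' (Or.inr hne) (hTsub (Finset.mem_coe.mpr ha')))
          (lt_irrefl a')
      -- A is disjoint from D
      have hAD : ∀ a' ∈ A, a' ∉ D := by
        intro a' ha' hd'
        exact absurd (hlt a' ha' a' (Or.inl hd') (hTsub (Finset.mem_coe.mpr ha')))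
          (lt_irrefl a')
      set y := x + B.sgnSum ε (A.erase a) with hy_def
      have hycoord : ∀ m, ‖B.coord m y‖ ≤ 1 := by
        intro m
        rw [hy_def, map_add, aux10_coord_sgnSum]
        by_cases hm : m ∈ A.erase a
        · rw [hAx m (Finset.erase_subset a A hm), if_pos hm, zero_add]
          exact le_of_eq (hε m)
        · rw [if_neg hm, add_zero]; exact hx m
      have hdy : B.coord d y = 0 := by
        rw [hy_def, map_add, aux10_coord_sgnSum,
          if_neg (fun hc => hAD d (Finset.erase_subset a A hc) hdD),
          hD0 d hdD, add_zero]
      -- Step 1: move the sign at `a` to a sign at `d`, via (b)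
      have step1 : ‖y + ε a • B.e a‖ ≤ ‖y + δ d • B.e d‖ := by
        refine hb y hycoord (ε a) (δ d) (hε a) (hδ d) a
          (hTsub (Finset.mem_coe.mpr haA)) d hdy ?_
        intro i hi hir
        rcases hi with hi | hi
        · rw [hi]; exact hTlt a haA d hdD (hi ▸ hir)
        · rw [hy_def, map_add, aux10_coord_sgnSum] at hi
          by_cases hiA : i ∈ A.erase a
          · exact lt_of_le_of_ne (A.min'_le i (Finset.erase_subset a A hiA))
              (Ne.symm (Finset.mem_erase.mp hiA).1)
          · rw [if_neg hiA, add_zero] at hi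
            exact hlt a haA i (Or.inr hi) hir
      -- Step 2: induction hypothesis applied to x + δ d • e d
      set x' := x + δ d • B.e d with hx'_def
      have hcoord_ed : ∀ m, B.coord m (δ d • B.e d) = if m = d then δ d else 0 := by
        intro m
        rw [map_smul, B.biorth, smul_eq_mul]
        by_cases hm : m = d <;> simp [hm]
      have hx'coord : ∀ m, ‖B.coord m x'‖ ≤ 1 := by
        intro m
        rw [hx'_def, map_add, hcoord_ed]
        by_cases hm : m = d
        · rw [if_pos hm, hm, hD0 d hdD, zero_add]; exact le_of_eq (hδ d)
        · rw [if_neg hm, add_zero]; exact hx m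
      have step2 : ‖x' + B.sgnSum ε (A.erase a)‖ ≤ ‖x' + B.sgnSum δ (D.erase d)‖ := by
        refine ih x' hx'coord (A.erase a) (D.erase d)
          (by rw [Finset.card_erase_of_mem haA, hcard]; omega)
          ⟨?_, ?_, ?_⟩ ?_ ?_
        · exact fun m hm => hTsub (Finset.mem_coe.mpr
            (Finset.erase_subset a A (Finset.mem_coe.mp hm)))
        · rw [Finset.card_erase_of_mem haA, Finset.card_erase_of_mem hdD]
          omega
        · intro a' ha' d' hd' hdr
          exact hTlt a' (Finset.erase_subset a A ha') d' (Finset.erase_subset d D hd') hdr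
        · intro d' hd'
          rw [hx'_def, map_add, hcoord_ed, if_neg (Finset.mem_erase.mp hd').1,
            hD0 d' (Finset.erase_subset d D hd'), add_zero]
        · intro a' ha' i hi hir
          have ha'A : a' ∈ A := Finset.erase_subset a A ha'
          rcases hi with hi | hi
          · exact hlt a' ha'A i (Or.inl (Finset.erase_subset d D hi)) hir
          · rw [hx'_def, map_add, hcoord_ed] at hi
            by_cases hid : i = d
            · rw [hid]; exact hlt a' ha'A d (Or.inl hdD) (hid ▸ hir)
            · rw [if_neg hid, add_zero] at hi
              exact hlt a' ha'A i (Or.inr hi) hir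
      -- assemble
      have e1 : x + B.sgnSum ε A = y + ε a • B.e a := by
        rw [hy_def, BasisOf.sgnSum, BasisOf.sgnSum,
          ← Finset.add_sum_erase A (fun m => ε m • B.e m) haA]
        abel
      have e2 : x' + B.sgnSum ε (A.erase a) = y + δ d • B.e d := by
        rw [hx'_def, hy_def]; abel
      have e3 : x' + B.sgnSum δ (D.erase d) = x + B.sgnSum δ D := by
        rw [hx'_def, BasisOf.sgnSum, BasisOf.sgnSum,
          ← Finset.add_sum_erase D (fun m => δ m • B.e m) hdD]
        abel
      rw [e1]
      calc ‖y + ε a • B.e a‖ ≤ ‖y + δ d • B.e d‖ := step1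
        _ = ‖x' + B.sgnSum ε (A.erase a)‖ := by rw [e2]
        _ ≤ ‖x' + B.sgnSum δ (D.erase d)‖ := step2
        _ = ‖x + B.sgnSum δ D‖ := by rw [e3]
end

section
/- Let 𝐦 and 𝐧 be strictly increasing sequences of positive integers whose symmetric difference (as subsets of ℕ) is infinite. Then there exist a Banach space X and a 1-unconditional basis 𝓑 of X that is 1-(𝐧, PSLC) but is not (𝐦, conservative) (and hence not democratic). -/
open scoped BigOperators ENNReal NNReal

/-!
Let `g(a) = ⌊√|(𝐧 \ 𝐦) ∩ [0, a]|⌋`, a nondecreasing weight, and norm finitely supported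
sequences by `‖x‖ = sup_W ∑_{n ∈ W} |x_n|`, the supremum over the finite sets `W` such that
every `F ⊆ W ∩ 𝐧` has at most `max 1 (g a)` elements for each `a ∈ F`; the canonical basis of
the completion is 1-unconditional. Off `𝐧` the norm is `ℓ¹`.

PSLC: given `W` testing `x + 1_{εA}`, replace `W ∩ A` by as many points of `B`. Those in `𝐧`
lie above `A`, so by monotonicity of `g` the new set is still admissible, and it tests
`x + 1_{δB}` with at least the same sum.

Not conservative: `𝐦` contains sets `A` of every size `k` with `‖1_A‖ = k`, either inside
`𝐦 \ 𝐧` or far out in `𝐦 ∩ 𝐧`, where `g ≥ k`. If `𝐧 \ 𝐦` is infinite, its first `r²` points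
form a set `D` disjoint from `𝐦` with `‖1_D‖ ≤ r`; otherwise `g` is bounded, and `D` can be
any `k` points of `𝐧` beyond `A`.
-/

namespace BasisOf

variable {𝕜 X : Type*} [RCLike 𝕜] [NormedAddCommGroup X] [NormedSpace 𝕜 X] (B : BasisOf 𝕜 X)

theorem coord_sum_smul (F : Finset ℕ) (a : ℕ → 𝕜) (m : ℕ) :
    B.coord m (∑ n ∈ F, a n • B.e n) = if m ∈ F then a m else 0 := by
  simp [B.biorth]

theorem coord_sgnSum (ε : ℕ → 𝕜) (A : Finset ℕ) (m : ℕ) :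
    B.coord m (B.sgnSum ε A) = if m ∈ A then ε m else 0 :=
  B.coord_sum_smul A ε m

theorem coord_ones (A : Finset ℕ) (m : ℕ) :
    B.coord m (B.ones A) = if m ∈ A then 1 else 0 := by
  simpa [sgnSum, ones] using B.coord_sgnSum (fun _ => 1) A m

theorem Democratic.conservative {B : BasisOf 𝕜 X} (h : B.Democratic fun k => k) (seq : ℕ → ℕ) :
    B.Conservative seq := by
  obtain ⟨C, hC⟩ := h
  refine ⟨max C 1, by positivity, fun A D hAD => (hC A D ⟨fun a _ => ⟨a, rfl⟩, hAD.2.1⟩).trans ?_⟩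
  gcongr
  exact le_max_left C 1

end BasisOf

theorem RCLike.exists_norm_le_one_norm_sum_mul {K : Type*} [RCLike K] (s : Finset ℕ)
    (z : ℕ → K) : ∃ u : ℕ → K, (∀ n, ‖u n‖ ≤ 1) ∧ ‖∑ n ∈ s, u n * z n‖ = ∑ n ∈ s, ‖z n‖ := by
  refine ⟨fun n => (starRingEnd K) (z n) / ‖z n‖, fun n => ?_, ?_⟩
  · rw [norm_div, RCLike.norm_conj, RCLike.norm_ofReal, abs_norm]
    exact div_self_le_one _
  · have hterm : ∀ n, (starRingEnd K) (z n) / ‖z n‖ * z n = ((‖z n‖ : ℝ) : K) := fun n => by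
      rcases eq_or_ne (z n) 0 with h | h
      · simp [h]
      · rw [div_mul_eq_mul_div, RCLike.conj_mul, sq, mul_div_assoc,
          div_self (by simpa using h), mul_one]
    simp_rw [hterm, ← RCLike.ofReal_sum, RCLike.norm_ofReal]
    exact abs_of_nonneg (Finset.sum_nonneg fun n _ => norm_nonneg _)

noncomputable section

namespace PSLCExample

section EmbedComplex

variable {𝕜 : Type*} [RCLike 𝕜]

variable (𝕜) in
def embedComplex : 𝕜 →+* ℂ where
  toFun c := ⟨RCLike.re c, RCLike.im c⟩
  map_one' := by apply Complex.ext <;> simp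
  map_mul' z w := by apply Complex.ext <;> simp [RCLike.mul_re, RCLike.mul_im]
  map_zero' := by apply Complex.ext <;> simp
  map_add' z w := by apply Complex.ext <;> simp

theorem norm_embedComplex (c : 𝕜) : ‖embedComplex 𝕜 c‖ = ‖c‖ := by
  rw [← sq_eq_sq₀ (norm_nonneg _) (norm_nonneg _), Complex.sq_norm, RCLike.norm_sq_eq_def]
  exact (Complex.normSq_mk _ _).trans (by ring)

variable (𝕜) in
def retractComplex (z : ℂ) : 𝕜 := (z.re : 𝕜) + (z.im : 𝕜) * RCLike.I

theorem retractComplex_add (z w : ℂ) :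
    retractComplex 𝕜 (z + w) = retractComplex 𝕜 z + retractComplex 𝕜 w := by
  simp only [retractComplex, Complex.add_re, Complex.add_im]
  push_cast
  ring

theorem retractComplex_embedComplex_mul (c : 𝕜) (z : ℂ) :
    retractComplex 𝕜 (embedComplex 𝕜 c * z) = c * retractComplex 𝕜 z := by
  simp only [retractComplex, Complex.mul_re, Complex.mul_im]
  change ((RCLike.re c * z.re - RCLike.im c * z.im : ℝ) : 𝕜)
      + ((RCLike.re c * z.im + RCLike.im c * z.re : ℝ) : 𝕜) * RCLike.I = _
  conv_rhs => rw [← RCLike.re_add_im c]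
  push_cast
  rcases RCLike.I_mul_I (K := 𝕜) with hI | hI
  · simp [hI, RCLike.im_eq_zero hI]
  · linear_combination (-(RCLike.im c : 𝕜) * (z.im : 𝕜)) * hI

theorem norm_retractComplex_le (z : ℂ) : ‖retractComplex 𝕜 z‖ ≤ 2 * ‖z‖ := by
  have hI : ‖(RCLike.I : 𝕜)‖ ≤ 1 := by rw [RCLike.norm_I]; split_ifs <;> norm_num
  calc ‖retractComplex 𝕜 z‖ ≤ |z.re| + |z.im| * 1 := by
        refine (norm_add_le _ _).trans ?_
        rw [norm_mul, RCLike.norm_ofReal, RCLike.norm_ofReal]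
        gcongr
    _ ≤ 2 * ‖z‖ := by linarith [Complex.abs_re_le_norm z, Complex.abs_im_le_norm z]

theorem retractComplex_embedComplex (c : 𝕜) : retractComplex 𝕜 (embedComplex 𝕜 c) = c :=
  RCLike.re_add_im c

end EmbedComplex

/-- `ℂ`, with `𝕜` acting through its embedding into `ℂ`. The carrier of a `BanachWithBasis 𝕜`
lives in `Type` while `𝕜` may live in any universe, so the space is built over this copy. -/
def ComplexOver (_𝕜 : Type*) : Type := ℂ

variable {𝕜 : Type*}

instance : NormedField (ComplexOver 𝕜) := inferInstanceAs (NormedField ℂ)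
instance : CompleteSpace (ComplexOver 𝕜) := inferInstanceAs (CompleteSpace ℂ)

theorem exists_norm_le_one_norm_sum_mul (s : Finset ℕ) (z : ℕ → ComplexOver 𝕜) :
    ∃ u : ℕ → ComplexOver 𝕜, (∀ n, ‖u n‖ ≤ 1) ∧ ‖∑ n ∈ s, u n * z n‖ = ∑ n ∈ s, ‖z n‖ :=
  RCLike.exists_norm_le_one_norm_sum_mul (K := ℂ) s z

open Finset BoundedContinuousFunction

variable {N : Set ℕ} {g : ℕ → ℕ}

variable (N g) in
/-- The `max 1` makes singletons admissible, so that the norm dominates the sup norm. -/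
def Admissible (W : Finset ℕ) : Prop :=
  ∀ F ⊆ W, (↑F : Set ℕ) ⊆ N → ∀ a ∈ F, #F ≤ max 1 (g a)

theorem admissible_singleton (n : ℕ) : Admissible N g {n} :=
  fun F hF _ _ _ => (card_le_card hF).trans (by simp)

theorem admissible_of_disjoint {W : Finset ℕ} (hW : ∀ n ∈ W, n ∉ N) : Admissible N g W :=
  fun _ hF hFN a ha => absurd (hFN ha) (hW a (hF ha))

theorem admissible_of_card_le {W : Finset ℕ} (hW : ∀ a ∈ W, #W ≤ g a) : Admissible N g W :=
  fun _ hF _ a ha => (card_le_card hF).trans ((hW a (hF ha)).trans (le_max_right _ _))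

theorem Admissible.sdiff_union (hg : Monotone g) {W A D : Finset ℕ} (hW : Admissible N g W)
    (hAN : (↑A : Set ℕ) ⊆ N) (hAD : ∀ a ∈ A, ∀ d ∈ D, d ∈ N → a < d) (hcard : #D ≤ #(W ∩ A)) :
    Admissible N g (W \ A ∪ D) := by
  intro F hF hFN a ha
  -- `F₁ ⊆ W` trades the points of `F` outside `W \ A` back for `W ∩ A`, which lies below them
  set F₁ := F ∩ (W \ A) ∪ W ∩ A
  have hF₁W : F₁ ⊆ W := union_subset (inter_subset_right.trans sdiff_subset) inter_subset_left
  have hF₁N : (↑F₁ : Set ℕ) ⊆ N := by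
    intro n hn
    rcases mem_union.1 hn with hn | hn
    exacts [hFN (mem_inter.1 hn).1, hAN (mem_inter.1 hn).2]
  have hFF₁ : #F ≤ #F₁ := by
    have hdisj : Disjoint (F ∩ (W \ A)) (W ∩ A) :=
      disjoint_left.2 fun n hn hn' => (mem_sdiff.1 (mem_inter.1 hn).2).2 (mem_inter.1 hn').2
    have hrest : F \ (W \ A) ⊆ D := fun n hn =>
      (mem_union.1 (hF (mem_sdiff.1 hn).1)).resolve_left (mem_sdiff.1 hn).2
    calc #F = #(F ∩ (W \ A)) + #(F \ (W \ A)) := (card_inter_add_card_sdiff _ _).symm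
      _ ≤ #(F ∩ (W \ A)) + #(W ∩ A) := by grw [card_le_card hrest, hcard]
      _ = #F₁ := (card_union_of_disjoint hdisj).symm
  by_cases haW : a ∈ W \ A
  · exact hFF₁.trans (hW F₁ hF₁W hF₁N a (mem_union_left _ (mem_inter.2 ⟨ha, haW⟩)))
  · have haD : a ∈ D := (mem_union.1 (hF ha)).resolve_left haW
    obtain ⟨a₀, ha₀⟩ : (W ∩ A).Nonempty := card_pos.1 ((card_pos.2 ⟨a, haD⟩).trans_le hcard)
    have ha₀a : a₀ < a := hAD a₀ (mem_inter.1 ha₀).2 a haD (hFN ha)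
    exact hFF₁.trans ((hW F₁ hF₁W hF₁N a₀ (mem_union_right _ ha₀)).trans
      (max_le_max le_rfl (hg ha₀a.le)))

variable (𝕜 N g) in
/-- A coordinate of the ambient `ℓ^∞` space. On `space` it evaluates to
`∑_{n ∈ support} phase n * x_n`, so that taking the supremum over all phases realises
`∑_{n ∈ support} |x_n|` as a sup norm. -/
structure Window : Type where
  support : Finset ℕ
  admissible : Admissible N g support
  phase : ℕ → ComplexOver 𝕜
  norm_phase_le : ∀ n, ‖phase n‖ ≤ 1

instance : TopologicalSpace (Window 𝕜 N g) := ⊥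
instance : DiscreteTopology (Window 𝕜 N g) := ⟨rfl⟩

variable (𝕜 N g) in
def Window.single (n : ℕ) : Window 𝕜 N g := ⟨{n}, admissible_singleton n, 1, fun _ => by simp⟩

variable (𝕜 N g) in
abbrev Ambient : Type := Window 𝕜 N g →ᵇ ComplexOver 𝕜

theorem norm_ite_phase_le (n : ℕ) (W : Window 𝕜 N g) :
    ‖if n ∈ W.support then W.phase n else 0‖ ≤ 1 := by
  split_ifs
  exacts [W.norm_phase_le n, by simp]

variable (𝕜 N g) in
def ambientVector (n : ℕ) : Ambient 𝕜 N g :=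
  .ofNormedAddCommGroup (fun W => if n ∈ W.support then W.phase n else 0)
    continuous_of_discreteTopology 1 (norm_ite_phase_le n)

theorem ambientVector_apply (n : ℕ) (W : Window 𝕜 N g) :
    ambientVector 𝕜 N g n W = if n ∈ W.support then W.phase n else 0 := rfl

theorem ambientVector_apply_single (m n : ℕ) :
    ambientVector 𝕜 N g m (Window.single 𝕜 N g n) = if m = n then 1 else 0 := by
  simp [ambientVector_apply, Window.single]

variable [RCLike 𝕜]

instance : Algebra 𝕜 (ComplexOver 𝕜) := (embedComplex 𝕜).toAlgebra

variable (𝕜) in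
abbrev embed : 𝕜 →+* ComplexOver 𝕜 := algebraMap 𝕜 (ComplexOver 𝕜)

theorem norm_embed (c : 𝕜) : ‖embed 𝕜 c‖ = ‖c‖ := norm_embedComplex c

instance : NormedAlgebra 𝕜 (ComplexOver 𝕜) where
  norm_smul_le c z := by rw [Algebra.smul_def, norm_mul, norm_embed]

theorem isClosed_range_embed : IsClosed (Set.range (embed 𝕜)) :=
  (AddMonoidHomClass.isometry_of_norm (embed 𝕜) norm_embed).isClosedEmbedding.isClosed_range

variable (𝕜) in
def retract : ComplexOver 𝕜 →L[𝕜] 𝕜 :=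
  LinearMap.mkContinuous
    { toFun := retractComplex 𝕜
      map_add' := retractComplex_add
      map_smul' := retractComplex_embedComplex_mul }
    2 norm_retractComplex_le

theorem retract_embed (c : 𝕜) : retract 𝕜 (embed 𝕜 c) = c :=
  retractComplex_embedComplex c

variable (𝕜 N g) in
def space : Submodule 𝕜 (Ambient 𝕜 N g) :=
  (Submodule.span 𝕜 (Set.range (ambientVector 𝕜 N g))).topologicalClosure

instance : CompleteSpace (space 𝕜 N g) :=
  (Submodule.isClosed_topologicalClosure _).completeSpace_coe

theorem ambientVector_mem_space (n : ℕ) : ambientVector 𝕜 N g n ∈ space 𝕜 N g :=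
  Submodule.le_topologicalClosure _ (Submodule.subset_span ⟨n, rfl⟩)

theorem apply_eq_sum_of_mem_space {y : Ambient 𝕜 N g} (hy : y ∈ space 𝕜 N g)
    (W : Window 𝕜 N g) :
    y W = ∑ n ∈ W.support, W.phase n * y (Window.single 𝕜 N g n) := by
  let defect : Ambient 𝕜 N g →L[𝕜] ComplexOver 𝕜 :=
    evalCLM 𝕜 W - ∑ n ∈ W.support, W.phase n • evalCLM 𝕜 (Window.single 𝕜 N g n)
  have hker : space 𝕜 N g ≤ LinearMap.ker (defect : Ambient 𝕜 N g →ₗ[𝕜] ComplexOver 𝕜) := by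
    refine Submodule.topologicalClosure_minimal _ ?_ (defect.isClosed_ker)
    rw [Submodule.span_le]
    rintro _ ⟨m, rfl⟩
    simp [defect, ambientVector_apply, Window.single]
  simpa [defect, sub_eq_zero] using hker hy

theorem apply_single_mem_range_embed {y : Ambient 𝕜 N g} (hy : y ∈ space 𝕜 N g) (n : ℕ) :
    y (Window.single 𝕜 N g n) ∈ Set.range (embed 𝕜) := by
  let ev : Ambient 𝕜 N g →L[𝕜] ComplexOver 𝕜 := evalCLM 𝕜 (Window.single 𝕜 N g n)
  let Z : Submodule 𝕜 (Ambient 𝕜 N g) :=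
    (LinearMap.range (Algebra.linearMap 𝕜 (ComplexOver 𝕜))).comap
      (ev : Ambient 𝕜 N g →ₗ[𝕜] ComplexOver 𝕜)
  have hZ : (Z : Set (Ambient 𝕜 N g)) = ev ⁻¹' Set.range (embed 𝕜) := by
    ext; simp [Z]
  have hle : space 𝕜 N g ≤ Z := by
    refine Submodule.topologicalClosure_minimal _ ?_ ?_
    · rw [Submodule.span_le]
      rintro _ ⟨m, rfl⟩
      rw [SetLike.mem_coe, ← SetLike.mem_coe, hZ]
      simp only [Set.mem_preimage, ev, evalCLM_apply, ambientVector_apply_single]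
      exact ⟨if m = n then 1 else 0, by split_ifs <;> simp⟩
    · rw [hZ]
      exact isClosed_range_embed.preimage (ContinuousLinearMap.continuous _)
  have := hle hy
  rwa [← SetLike.mem_coe, hZ] at this

variable (𝕜 N g) in
def coordFun (n : ℕ) : space 𝕜 N g →L[𝕜] 𝕜 :=
  (retract 𝕜).comp ((evalCLM 𝕜 (Window.single 𝕜 N g n)).comp (space 𝕜 N g).subtypeL)

theorem embed_coordFun (n : ℕ) (x : space 𝕜 N g) :
    embed 𝕜 (coordFun 𝕜 N g n x) = (x : Ambient 𝕜 N g) (Window.single 𝕜 N g n) := by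
  obtain ⟨c, hc⟩ := apply_single_mem_range_embed x.2 n
  change embed 𝕜 (retract 𝕜 ((x : Ambient 𝕜 N g) (Window.single 𝕜 N g n))) = _
  rw [← hc, retract_embed]

theorem norm_coordFun (n : ℕ) (x : space 𝕜 N g) :
    ‖coordFun 𝕜 N g n x‖ = ‖(x : Ambient 𝕜 N g) (Window.single 𝕜 N g n)‖ := by
  rw [← norm_embed, embed_coordFun]

theorem norm_coordFun_apply_le (n : ℕ) (x : space 𝕜 N g) : ‖coordFun 𝕜 N g n x‖ ≤ ‖x‖ :=
  (norm_coordFun n x).trans_le (norm_coe_le_norm _ _)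

variable (𝕜 N g) in
def basisVector (n : ℕ) : space 𝕜 N g := ⟨ambientVector 𝕜 N g n, ambientVector_mem_space n⟩

theorem coordFun_basisVector (j k : ℕ) :
    coordFun 𝕜 N g j (basisVector 𝕜 N g k) = if j = k then 1 else 0 := by
  apply (embed 𝕜).injective
  rw [embed_coordFun]
  change ambientVector 𝕜 N g k (Window.single 𝕜 N g j) = _
  rw [ambientVector_apply_single]
  split_ifs with h₁ h₂ h₂ <;> simp_all

theorem norm_basisVector (n : ℕ) : ‖basisVector 𝕜 N g n‖ = 1 := by
  refine le_antisymm ((BoundedContinuousFunction.norm_le zero_le_one).2 (norm_ite_phase_le n)) ?_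
  simpa [coordFun_basisVector] using norm_coordFun_apply_le n (basisVector 𝕜 N g n)

theorem norm_coordFun_eq_one (n : ℕ) : ‖coordFun 𝕜 N g n‖ = 1 := by
  refine le_antisymm (ContinuousLinearMap.opNorm_le_bound _ zero_le_one fun x => ?_) ?_
  · simpa using norm_coordFun_apply_le n x
  · have := (coordFun 𝕜 N g n).le_opNorm (basisVector 𝕜 N g n)
    rwa [coordFun_basisVector, if_pos rfl, norm_one, norm_basisVector, mul_one] at this

theorem dense_span_basisVector :
    Dense (Submodule.span 𝕜 (Set.range (basisVector 𝕜 N g)) : Set (space 𝕜 N g)) := by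
  have himage : Subtype.val '' (Submodule.span 𝕜 (Set.range (basisVector 𝕜 N g)) :
      Set (space 𝕜 N g)) = Submodule.span 𝕜 (Set.range (ambientVector 𝕜 N g)) := by
    rw [← Submodule.coe_subtype, ← Submodule.map_coe, Submodule.map_span, ← Set.range_comp]
    rfl
  rw [Topology.IsInducing.subtypeVal.dense_iff]
  intro x
  erw [himage, ← Submodule.topologicalClosure_coe]
  exact x.2

variable (𝕜 N g) in
def basis : BasisOf 𝕜 (space 𝕜 N g) where
  e := basisVector 𝕜 N g
  coord := coordFun 𝕜 N g
  dense_span := dense_span_basisVector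
  biorth := coordFun_basisVector
  norm_bounds := ⟨1, 1, one_pos,
    fun n => ⟨(norm_basisVector n).ge, (norm_coordFun_eq_one n).ge⟩,
    fun n => ⟨(norm_basisVector n).le, (norm_coordFun_eq_one n).le⟩⟩

theorem norm_le_iff {x : space 𝕜 N g} {M : ℝ} (hM : 0 ≤ M) :
    ‖x‖ ≤ M ↔ ∀ W, Admissible N g W → ∑ n ∈ W, ‖(basis 𝕜 N g).coord n x‖ ≤ M := by
  change ‖(x : Ambient 𝕜 N g)‖ ≤ M ↔ _
  simp only [basis, norm_coordFun]
  rw [BoundedContinuousFunction.norm_le hM]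
  constructor
  · intro h W hW
    obtain ⟨u, hu, hsum⟩ :=
      exists_norm_le_one_norm_sum_mul W fun n => (x : Ambient 𝕜 N g) (Window.single 𝕜 N g n)
    rw [← hsum, ← apply_eq_sum_of_mem_space x.2 ⟨W, hW, u, hu⟩]
    exact h _
  · intro h W
    rw [apply_eq_sum_of_mem_space x.2 W]
    refine (norm_sum_le _ _).trans ((Finset.sum_le_sum fun n _ => ?_).trans (h _ W.admissible))
    rw [norm_mul]
    exact mul_le_of_le_one_left (norm_nonneg _) (W.norm_phase_le n)

theorem sum_norm_coord_le_norm (x : space 𝕜 N g) {W : Finset ℕ} (hW : Admissible N g W) :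
    ∑ n ∈ W, ‖(basis 𝕜 N g).coord n x‖ ≤ ‖x‖ :=
  (norm_le_iff (norm_nonneg x)).1 le_rfl W hW

theorem norm_le_norm_of_norm_coord_le {x y : space 𝕜 N g}
    (h : ∀ n, ‖(basis 𝕜 N g).coord n x‖ ≤ ‖(basis 𝕜 N g).coord n y‖) : ‖x‖ ≤ ‖y‖ :=
  (norm_le_iff (norm_nonneg y)).2 fun _ hW =>
    (Finset.sum_le_sum fun n _ => h n).trans (sum_norm_coord_le_norm y hW)

theorem oneUnconditional : (basis 𝕜 N g).OneUnconditional := fun F a b hab =>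
  norm_le_norm_of_norm_coord_le fun m => by
    rw [BasisOf.coord_sum_smul, BasisOf.coord_sum_smul]
    split_ifs
    exacts [hab m, le_rfl]

theorem sum_le_sum_sdiff_union {a b : ℕ → ℝ} {W A D : Finset ℕ} (ha : ∀ n, 0 ≤ a n)
    (haA : ∀ n ∈ A, a n = 1) (hab : ∀ n ∉ A, a n ≤ b n) (habD : ∀ n ∈ D, a n + 1 ≤ b n)
    (hcard : #(W ∩ A) ≤ #D) :
    ∑ n ∈ W, a n ≤ ∑ n ∈ W \ A ∪ D, b n := by
  have hWA : ∑ n ∈ W ∩ A, a n = #(W ∩ A) := by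
    rw [sum_congr rfl fun n hn => haA n (mem_inter.1 hn).2]
    simp
  have hsub : ∑ n ∈ W \ A, a n ≤ ∑ n ∈ (W \ A ∪ D) \ D, a n + ∑ n ∈ D, a n := by
    rw [sum_sdiff subset_union_right]
    exact sum_le_sum_of_subset_of_nonneg subset_union_left fun n _ _ => ha n
  have hout : ∑ n ∈ (W \ A ∪ D) \ D, a n ≤ ∑ n ∈ (W \ A ∪ D) \ D, b n :=
    sum_le_sum fun n hn => hab n fun hnA => by
      rcases mem_union.1 (mem_sdiff.1 hn).1 with h | h
      exacts [(mem_sdiff.1 h).2 hnA, (mem_sdiff.1 hn).2 h]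
  have hin : ∑ n ∈ D, a n + #D ≤ ∑ n ∈ D, b n := by
    simpa [sum_add_distrib] using sum_le_sum habD
  have hcard' : (#(W ∩ A) : ℝ) ≤ #D := by exact_mod_cast hcard
  rw [← sum_inter_add_sum_sdiff W A, hWA, ← sum_sdiff (subset_union_right (s₁ := W \ A))]
  linarith

theorem pslcWith (seq : ℕ → ℕ) (hg : Monotone g) :
    (basis 𝕜 (Set.range seq) g).PSLCWith seq 1 := by
  intro x _ A D hAD hxD horder ε δ hε hδ
  set B := basis 𝕜 (Set.range seq) g
  have hxA : ∀ n ∈ A, B.coord n x = 0 := fun n hn =>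
    by_contra fun h => lt_irrefl n (horder n hn n (Or.inr h) (hAD.1 hn))
  have hDA : Disjoint D A := disjoint_left.2 fun n hnD hnA =>
    lt_irrefl n (horder n hnA n (Or.inl hnD) (hAD.1 hnA))
  have hcoord : ∀ (η : ℕ → 𝕜) (E : Finset ℕ) n,
      B.coord n (x + B.sgnSum η E) = B.coord n x + if n ∈ E then η n else 0 := fun η E n => by
    rw [map_add, B.coord_sgnSum]
  rw [one_mul, norm_le_iff (norm_nonneg _)]
  intro W hW
  obtain ⟨D₀, hD₀D, hD₀card⟩ :=
    exists_subset_card_eq ((card_le_card inter_subset_right).trans hAD.2.1 : #(W ∩ A) ≤ #D)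
  refine (sum_le_sum_sdiff_union (fun n => norm_nonneg _) (fun n hn => ?_) (fun n hn => ?_)
    (fun n hn => ?_) hD₀card.ge).trans
    (sum_norm_coord_le_norm _ (hW.sdiff_union hg hAD.1
      (fun a ha d hd => hAD.2.2 a ha d (hD₀D hd)) hD₀card.le))
  · rw [hcoord, hxA n hn, if_pos hn, zero_add, hε]
  · rw [hcoord, hcoord, if_neg hn]
    by_cases hnD : n ∈ D
    · simp [hxD n hnD]
    · rw [if_neg hnD]
  · rw [hcoord, hcoord, if_pos (hD₀D hn), if_neg (disjoint_left.1 hDA (hD₀D hn)),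
      hxD n (hD₀D hn)]
    simp [hδ]

theorem card_le_norm_ones {A : Finset ℕ} (hA : Admissible N g A) :
    (#A : ℝ) ≤ ‖(basis 𝕜 N g).ones A‖ := by
  simpa [BasisOf.coord_ones, apply_ite, sum_ite_mem] using
    sum_norm_coord_le_norm ((basis 𝕜 N g).ones A) hA

theorem norm_ones_le {D : Finset ℕ} (hD : (↑D : Set ℕ) ⊆ N) {c : ℕ} (hc : ∀ d ∈ D, g d ≤ c) :
    ‖(basis 𝕜 N g).ones D‖ ≤ max 1 c := by
  rw [norm_le_iff (by positivity)]
  intro W hW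
  have hsum : ∑ n ∈ W, ‖(basis 𝕜 N g).coord n ((basis 𝕜 N g).ones D)‖ = #(W ∩ D) := by
    simp [BasisOf.coord_ones, apply_ite, sum_ite_mem]
  rw [hsum]
  obtain h | ⟨d, hd⟩ := (W ∩ D).eq_empty_or_nonempty
  · simp [h]
  · have := hW (W ∩ D) inter_subset_left (fun n hn => hD (mem_inter.1 hn).2) d hd
    exact_mod_cast this.trans (max_le_max le_rfl (hc d (mem_inter.1 hd).2))

section SqrtCount

open Classical

def sqrtCount (S : Set ℕ) (x : ℕ) : ℕ := Nat.sqrt (Nat.count (· ∈ S) (x + 1))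

variable {S : Set ℕ}

theorem sqrtCount_mono (S : Set ℕ) : Monotone (sqrtCount S) := fun _ _ h =>
  Nat.sqrt_le_sqrt (Nat.count_monotone _ (Nat.succ_le_succ h))

theorem sqrtCount_nth (hS : S.Infinite) (i : ℕ) :
    sqrtCount S (Nat.nth (· ∈ S) i) = Nat.sqrt (i + 1) := by
  rw [sqrtCount, Nat.count_nth_succ_of_infinite (p := (· ∈ S)) hS]

theorem sqrtCount_le (hS : S.Finite) (x : ℕ) : sqrtCount S x ≤ Nat.sqrt #hS.toFinset :=
  Nat.sqrt_le_sqrt (Nat.count_le_card (p := (· ∈ S)) hS _)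

end SqrtCount

variable {M : Set ℕ}

theorem exists_admissible_subset (hM : M.Infinite) (hdiff : (symmDiff M N).Infinite) (k : ℕ) :
    ∃ A : Finset ℕ, (↑A : Set ℕ) ⊆ M ∧ #A = k ∧ Admissible N (sqrtCount (N \ M)) A := by
  by_cases hMN : (M \ N).Infinite
  · obtain ⟨A, hAsub, hcard⟩ := hMN.exists_subset_card_eq k
    exact ⟨A, hAsub.trans Set.sdiff_subset, hcard,
      admissible_of_disjoint fun n hn => (hAsub (mem_coe.2 hn)).2⟩
  have hS : (N \ M).Infinite := fun hS =>
    hdiff ((Set.not_infinite.1 hMN).union hS)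
  have hMN' : (M ∩ N).Infinite := fun h =>
    hM (Set.sdiff_union_inter M N ▸ (Set.not_infinite.1 hMN).union h)
  -- beyond the `k²`-th element of `N \ M` the weight is at least `k`
  set t := Nat.nth (· ∈ N \ M) (k * k)
  obtain ⟨A, hAsub, hcard⟩ := (hMN'.sdiff (Set.finite_Iic t)).exists_subset_card_eq k
  refine ⟨A, fun a ha => (hAsub ha).1.1, hcard, admissible_of_card_le fun a ha => ?_⟩
  have hta : t ≤ a := (not_le.1 (hAsub (mem_coe.2 ha)).2).le
  calc #A = Nat.sqrt (k * k) := by rw [hcard, Nat.sqrt_eq]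
    _ ≤ sqrtCount (N \ M) t := by rw [sqrtCount_nth hS]; exact Nat.sqrt_le_sqrt (by omega)
    _ ≤ sqrtCount (N \ M) a := sqrtCount_mono _ hta

theorem exists_norm_ones_le_of_infinite (hS : (N \ M).Infinite) (r : ℕ) :
    ∃ D : Finset ℕ, (↑D : Set ℕ) ⊆ N \ M ∧ #D = r * r ∧
      ‖(basis 𝕜 N (sqrtCount (N \ M))).ones D‖ ≤ max 1 r := by
  have hsub : (↑((range (r * r)).image (Nat.nth (· ∈ N \ M))) : Set ℕ) ⊆ N \ M := by
    intro d hd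
    obtain ⟨i, -, rfl⟩ := mem_image.1 (mem_coe.1 hd)
    exact Nat.nth_mem_of_infinite hS i
  refine ⟨_, hsub, by rw [card_image_of_injective _ (Nat.nth_injective (p := (· ∈ N \ M)) hS), card_range],
    norm_ones_le (hsub.trans Set.sdiff_subset) fun d hd => ?_⟩
  obtain ⟨i, hi, rfl⟩ := mem_image.1 hd
  rw [sqrtCount_nth hS, ← Nat.sqrt_eq r]
  exact Nat.sqrt_le_sqrt (mem_range.1 hi)

theorem exists_norm_ones_le_of_finite (hN : N.Infinite) (hS : (N \ M).Finite) (k t : ℕ) :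
    ∃ D : Finset ℕ, (∀ d ∈ D, t < d) ∧ #D = k ∧
      ‖(basis 𝕜 N (sqrtCount (N \ M))).ones D‖ ≤ max 1 (Nat.sqrt #hS.toFinset) := by
  obtain ⟨D, hDsub, hcard⟩ := (hN.sdiff (Set.finite_Iic t)).exists_subset_card_eq k
  exact ⟨D, fun d hd => not_le.1 (hDsub (mem_coe.2 hd)).2, hcard,
    norm_ones_le (fun d hd => (hDsub hd).1) fun d _ => sqrtCount_le hS d⟩

theorem exists_mul_norm_ones_lt (hN : N.Infinite) {C : ℝ} (hC : 0 ≤ C) :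
    ∃ k : ℕ, ∀ t : ℕ, ∃ D : Finset ℕ, (∀ d ∈ D, d ∈ M → t < d) ∧ #D = k ∧
      C * ‖(basis 𝕜 N (sqrtCount (N \ M))).ones D‖ < k := by
  by_cases hS : (N \ M).Finite
  · set c := max 1 (Nat.sqrt #hS.toFinset)
    refine ⟨⌈C * c⌉₊ + 1, fun t => ?_⟩
    obtain ⟨D, hDt, hcard, hD⟩ := exists_norm_ones_le_of_finite (𝕜 := 𝕜) hN hS (⌈C * c⌉₊ + 1) t
    refine ⟨D, fun d hd _ => hDt d hd, hcard, ?_⟩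
    push_cast
    nlinarith [Nat.le_ceil (C * c)]
  · set r := ⌈C⌉₊ + 1
    obtain ⟨D, hDS, hcard, hD⟩ := exists_norm_ones_le_of_infinite (𝕜 := 𝕜) hS r
    refine ⟨r * r, fun t => ⟨D, fun d hd hdM => absurd hdM (hDS hd).2, hcard, ?_⟩⟩
    rw [max_eq_right (by omega)] at hD
    have hCr : C < r := by push_cast [r]; linarith [Nat.le_ceil C]
    push_cast
    nlinarith [norm_nonneg ((basis 𝕜 N (sqrtCount (N \ M))).ones D)]

theorem not_conservative {mseq nseq : ℕ → ℕ} (hm : StrictMono mseq) (hn : StrictMono nseq)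
    (hdiff : (symmDiff (Set.range mseq) (Set.range nseq)).Infinite) :
    ¬ (basis 𝕜 (Set.range nseq) (sqrtCount (Set.range nseq \ Set.range mseq))).Conservative
      mseq := by
  rintro ⟨C, hC0, hC⟩
  obtain ⟨k, hk⟩ := exists_mul_norm_ones_lt (𝕜 := 𝕜) (M := Set.range mseq)
    (Set.infinite_range_of_injective hn.injective) hC0.le
  obtain ⟨A, hAM, hAcard, hA⟩ :=
    exists_admissible_subset (Set.infinite_range_of_injective hm.injective) hdiff k
  obtain ⟨D, hDA, hDcard, hD⟩ := hk (A.sup id)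
  have hAD := hC A D ⟨hAM, (hAcard.trans hDcard.symm).le,
    fun a ha d hd hdM => (le_sup (f := id) ha).trans_lt (hDA d hd hdM)⟩
  have := card_le_norm_ones (𝕜 := 𝕜) hA
  rw [hAcard] at this
  linarith

end PSLCExample

end

/-- If the symmetric difference of 𝐦 and 𝐧 is infinite, there is a Banach
space with a 1-unconditional basis that is 1-(𝐧, PSLC) but not (𝐦, conservative)
(hence not democratic). -/
theorem statement11 {𝕜 : Type*} [RCLike 𝕜] (mseq nseq : ℕ → ℕ)
    (hm : StrictMono mseq) (hn : StrictMono nseq)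
    (hdiff : Set.Infinite (symmDiff (Set.range mseq) (Set.range nseq))) :
    ∃ W : BanachWithBasis 𝕜, W.basis.OneUnconditional ∧ W.basis.PSLCWith nseq 1 ∧
      ¬ W.basis.Conservative mseq ∧ ¬ W.basis.Democratic (fun k => k) := by
  open PSLCExample in
  have hnc := not_conservative (𝕜 := 𝕜) hm hn hdiff
  exact ⟨{ carrier := _, basis := basis 𝕜 _ _ }, oneUnconditional,
    pslcWith nseq (sqrtCount_mono _), hnc, fun h => hnc (h.conservative mseq)⟩
end
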